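/- Let h = 0112122122212222⋯ be the fixed point beginning with 0 of the morphism μ on {0,1,2}* given by μ(0) = 01, μ(1) = 12, μ(2) = 2. Then the 3-binomial complexity of h equals its factor complexity: b^(3)_h(n) = p_h(n) for all n ≥ 0. -/

import Mathlib

/-- The number of occurrences of `w` as a (scattered) subword of `u`:
the binomial coefficient of the words `u` and `w`. -/
def wordBinom {A : Type*} [DecidableEq A] (u w : List A) : ℕ := u.sublists.count w

/-- `k`-binomial equivalence of finite words: all binomial coefficients with respect to
words of length at most `k` agree. -/
def BinEquiv {A : Type*} [DecidableEq A] (k : ℕ) (u v : List A) : Prop :=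
  ∀ x : List A, x.length ≤ k → wordBinom u x = wordBinom v x

/-- `k`-binomial equivalence as a setoid. -/
def binSetoid (A : Type*) [DecidableEq A] (k : ℕ) : Setoid (List A) where
  r := BinEquiv k
  iseqv := ⟨fun _ _ _ => rfl, fun h x hx => (h x hx).symm,
    fun h h' x hx => (h x hx).trans (h' x hx)⟩

/-- `u` occurs in the infinite word `x` at position `i`. -/
def OccursAt {A : Type*} (u : List A) (x : ℕ → A) (i : ℕ) : Prop :=
  u = (List.range u.length).map (fun j => x (i + j))

/-- `u` is a factor of the infinite word `x`. -/
def FactorOf {A : Type*} (u : List A) (x : ℕ → A) : Prop := ∃ i, OccursAt u x i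

/-- The set of length-`n` factors of `x`. -/
def Fac {A : Type*} (x : ℕ → A) (n : ℕ) : Set (List A) :=
  {u | u.length = n ∧ FactorOf u x}

/-- Factor complexity of an infinite word. -/
noncomputable def fc {A : Type*} (x : ℕ → A) (n : ℕ) : ℕ := (Fac x n).ncard

/-- `k`-binomial complexity of an infinite word: the number of `k`-binomial equivalence
classes of length-`n` factors. -/
noncomputable def bc {A : Type*} [DecidableEq A] (x : ℕ → A) (k n : ℕ) : ℕ :=
  (Quotient.mk (binSetoid A k) '' Fac x n).ncard

/-- Application of a morphism (given by the images of letters) to a finite word. -/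
def mAp {A B : Type*} (f : A → List B) (u : List A) : List B := (u.map f).flatten

/-- A morphism is Parikh-collinear if the Parikh vectors of images of letters are
pairwise rationally collinear. -/
def ParikhCollinear {A B : Type*} [DecidableEq B] (f : A → List B) : Prop :=
  ∀ a b : A, ∃ r : ℚ, ∀ c : B, ((f b).count c : ℚ) = r * ((f a).count c)

/-- Length-`n` prefix of an infinite word. -/
def pre {A : Type*} (x : ℕ → A) (n : ℕ) : List A := (List.range n).map x

/-- `z` is the image of the infinite word `x` under the morphism `f`, and this image
is an infinite word: images of prefixes of `x` are prefixes of `z`, of unbounded length. -/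
def InfMapsTo {A B : Type*} (f : A → List B) (x : ℕ → A) (z : ℕ → B) : Prop :=
  (∀ n, mAp f (pre x n) = pre z (mAp f (pre x n)).length) ∧
  (∀ m, ∃ n, m ≤ (mAp f (pre x n)).length)

/-- The morphism `μ : 0 ↦ 01, 1 ↦ 12, 2 ↦ 2`. -/
def mu : Fin 3 → List (Fin 3) :=
  fun a => if a = 0 then [0, 1] else if a = 1 then [1, 2] else [2]

/-!
The fixed point is `h = 0 · 1 2⁰ · 1 2¹ · 1 2² ⋯`, so a length-`n` factor of `h` is either its
prefix, the only factor containing `0`, or a factor of the tail `1 2⁰ 1 2¹ 1 2² ⋯` over `{1, 2}`.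
A word over `{1, 2}` is determined by its length and by the list `r` of the numbers of `2`s to
the left of each of its `1`s. For a factor of the tail, `r = a, a + k, a + 2k + 1, …` has gaps
`k, k + 1, k + 2, …`. The binomial coefficients of `1`, `21` and `221` give the length of `r`,
`Σ r` and `Σ r²`, and for fixed length the last two determine `a` and `k`. So `3`-binomially
equivalent factors are equal.
-/

open List

theorem sum_sq_map_add (l : List ℕ) (d : ℕ) :
    ((l.map (· + d)).map (· ^ 2)).sum = (l.map (· ^ 2)).sum + 2 * d * l.sum + l.length * d ^ 2 := by
  induction l with
  | nil => simp
  | cons r l ih => simp only [map_cons, sum_cons, length_cons, ih]; ring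

section Binomial

variable {A : Type*} [DecidableEq A]

theorem wordBinom_eq_count_sublists' (u w : List A) : wordBinom u w = u.sublists'.count w := by
  simp only [wordBinom, count_eq_countP]
  exact (sublists_perm_sublists' u).countP_eq _

theorem wordBinom_cons_cons (a b : A) (u w : List A) :
    wordBinom (a :: u) (b :: w) = wordBinom u (b :: w) + if a = b then wordBinom u w else 0 := by
  simp only [wordBinom_eq_count_sublists', sublists'_cons, count_append]
  congr 1
  split_ifs with hab
  · rw [hab]
    exact count_map_of_injective _ _ cons_injective _
  · exact count_eq_zero.2 (by simp [hab])

theorem wordBinom_nil_right (u : List A) : wordBinom u [] = 1 := by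
  induction u with
  | nil => rfl
  | cons a u ih =>
    rw [wordBinom_eq_count_sublists', sublists'_cons, count_append, ← wordBinom_eq_count_sublists',
      ih, count_eq_zero.2 (by simp)]

theorem wordBinom_singleton (u : List A) (c : A) : wordBinom u [c] = u.count c := by
  induction u with
  | nil => rfl
  | cons a u ih =>
    rw [wordBinom_cons_cons, ih, wordBinom_nil_right, count_cons]
    simp

theorem BinEquiv.count_eq {k : ℕ} {u v : List A} (h : BinEquiv k u v) (hk : 1 ≤ k) (c : A) :
    u.count c = v.count c := by
  simpa only [wordBinom_singleton] using h [c] hk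

end Binomial

section CountsBefore

variable {A : Type*} [DecidableEq A] (x y : A)

/-- For each occurrence of `y` in a word, in order, the number of `x`s to its left. -/
def countsBefore : List A → List ℕ
  | [] => []
  | c :: u => (if c = y then [0] else []) ++ (countsBefore u).map (· + if c = x then 1 else 0)

variable {x y}

@[simp]
theorem countsBefore_nil : countsBefore x y [] = [] := rfl

theorem countsBefore_cons (c : A) (u : List A) :
    countsBefore x y (c :: u) =
      (if c = y then [0] else []) ++ (countsBefore x y u).map (· + if c = x then 1 else 0) := rfl

theorem length_countsBefore (u : List A) : (countsBefore x y u).length = u.count y := by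
  induction u with
  | nil => rfl
  | cons c u ih =>
    by_cases hc : c = y <;> simp [countsBefore_cons, ih, hc, eq_comm (a := y)]

theorem countsBefore_eq_nil {u : List A} (h : y ∉ u) : countsBefore x y u = [] :=
  eq_nil_of_length_eq_zero ((length_countsBefore u).trans (count_eq_zero.2 h))

theorem wordBinom_pair (u : List A) : wordBinom u [x, y] = (countsBefore x y u).sum := by
  induction u with
  | nil => rfl
  | cons c u ih =>
    rw [wordBinom_cons_cons, ih, wordBinom_singleton, countsBefore_cons,
      ← length_countsBefore (x := x)]
    obtain rfl | hx := eq_or_ne c x <;> obtain rfl | hy := eq_or_ne c y <;> simp [*, sum_map_add]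

theorem wordBinom_triple (u : List A) :
    2 * wordBinom u [x, x, y] + wordBinom u [x, y] = ((countsBefore x y u).map (· ^ 2)).sum := by
  induction u with
  | nil => rfl
  | cons c u ih =>
    rw [wordBinom_cons_cons, wordBinom_cons_cons, wordBinom_singleton, countsBefore_cons,
      map_append, sum_append, sum_sq_map_add, ← ih, wordBinom_pair, length_countsBefore]
    obtain rfl | hx := eq_or_ne c x <;> obtain rfl | hy := eq_or_ne c y <;> simp [*] <;> ring

theorem countsBefore_append (u v : List A) :
    countsBefore x y (u ++ v) = countsBefore x y u ++ (countsBefore x y v).map (· + u.count x) := by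
  induction u with
  | nil => simp
  | cons c u ih =>
    by_cases hcx : c = x <;>
      simp [countsBefore_cons, ih, hcx, eq_comm (a := x)]

theorem exists_map_add_infix_countsBefore {u w : List A} (h : u <:+: w) :
    ∃ d, (countsBefore x y u).map (· + d) <:+: countsBefore x y w := by
  obtain ⟨p, q, rfl⟩ := h
  refine ⟨p.count x, countsBefore x y p, (countsBefore x y q).map (· + (p ++ u).count x), ?_⟩
  rw [countsBefore_append, countsBefore_append, append_assoc]

theorem countsBefore_injective (hxy : x ≠ y) {u v : List A} (hu : ∀ c ∈ u, c = x ∨ c = y)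
    (hv : ∀ c ∈ v, c = x ∨ c = y) (hlen : u.length = v.length)
    (h : countsBefore x y u = countsBefore x y v) : u = v := by
  induction u generalizing v with
  | nil => exact (eq_nil_of_length_eq_zero hlen.symm).symm
  | cons a u ih =>
    obtain _ | ⟨b, v⟩ := v
    · simp at hlen
    have ih' := fun h' => ih (fun c hc => hu c (mem_cons_of_mem a hc))
      (fun c hc => hv c (mem_cons_of_mem b hc)) (by simpa using hlen) h'
    rcases hu a mem_cons_self with rfl | rfl <;> rcases hv b mem_cons_self with rfl | rfl
    · simp only [countsBefore_cons, hxy, if_false, if_true, nil_append] at h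
      rw [ih' (map_injective_iff.2 (add_left_injective 1) h)]
    · cases hcu : countsBefore a b u <;> simp [countsBefore_cons, hxy, hcu] at h
    · cases hcv : countsBefore b a v <;> simp [countsBefore_cons, hxy, hcv] at h
    · simp only [countsBefore_cons, Ne.symm hxy, if_false, if_true, add_zero, map_id'] at h
      rw [ih' (cons_injective h)]

end CountsBefore

def quadSeq : ℕ → ℕ → ℕ → List ℕ
  | _, _, 0 => []
  | a, k, s + 1 => a :: quadSeq (a + k) (k + 1) s

theorem length_quadSeq (a k s : ℕ) : (quadSeq a k s).length = s := by
  induction s generalizing a k with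
  | zero => rfl
  | succ s ih => simp [quadSeq, ih]

theorem map_add_quadSeq (a k s d : ℕ) : (quadSeq a k s).map (· + d) = quadSeq (a + d) k s := by
  induction s generalizing a k with
  | zero => rfl
  | succ s ih => simp only [quadSeq, map_cons, ih, Nat.add_right_comm]

theorem take_quadSeq (a k s p : ℕ) : (quadSeq a k s).take p = quadSeq a k (min p s) := by
  induction s generalizing a k p with
  | zero => simp [quadSeq]
  | succ s ih => cases p <;> simp [quadSeq, ih, Nat.succ_min_succ]

theorem exists_drop_quadSeq (a k s t : ℕ) :
    ∃ a' k', (quadSeq a k s).drop t = quadSeq a' k' (s - t) := by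
  induction t generalizing a k s with
  | zero => exact ⟨a, k, rfl⟩
  | succ t ih =>
    cases s with
    | zero => exact ⟨0, 0, by simp [quadSeq]⟩
    | succ s => simpa [quadSeq] using ih (a + k) (k + 1) s

def IsQuadSeq (l : List ℕ) : Prop := ∃ a k s, l = quadSeq a k s

theorem IsQuadSeq.of_infix {l l' : List ℕ} (h : l <:+: l') (hl' : IsQuadSeq l') : IsQuadSeq l := by
  obtain ⟨a, k, s, rfl⟩ := hl'
  obtain ⟨p, q, hpq⟩ := h
  obtain ⟨a', k', hdrop⟩ := exists_drop_quadSeq a k s p.length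
  refine ⟨a', k', min l.length (s - p.length), ?_⟩
  rw [← take_quadSeq, ← hdrop, ← hpq, append_assoc, drop_left, take_left]

theorem IsQuadSeq.of_map_add {l : List ℕ} {d : ℕ} (h : IsQuadSeq (l.map (· + d))) :
    IsQuadSeq l := by
  obtain ⟨a, k, s, hl⟩ := h
  refine ⟨a - d, k, s, map_injective_iff.2 (add_left_injective d) ?_⟩
  cases s with
  | zero => simpa [quadSeq] using hl
  | succ s =>
    have had : d ≤ a := by
      obtain _ | ⟨r, l⟩ := l <;> simp [quadSeq] at hl
      omega
    rw [hl, map_add_quadSeq, Nat.sub_add_cancel had]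

theorem sum_quadSeq (a k s : ℕ) :
    6 * ((quadSeq a k s).sum : ℤ) = 6 * a * s + 3 * k * s * (s - 1) + s * (s - 1) * (s - 2) := by
  induction s generalizing a k with
  | zero => simp [quadSeq]
  | succ s ih =>
    have := ih (a + k) (k + 1)
    simp only [quadSeq, sum_cons] at this ⊢
    push_cast at this ⊢
    linear_combination this

theorem sum_sq_quadSeq (a k s : ℕ) :
    120 * ((((quadSeq a k s).map (· ^ 2)).sum : ℕ) : ℤ) =
      6 * s ^ 5 - 30 * s ^ 4 + 50 * s ^ 3 - 30 * s ^ 2 + 4 * s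
        + k * (30 * s ^ 4 - 100 * s ^ 3 + 90 * s ^ 2 - 20 * s)
        + k ^ 2 * (40 * s ^ 3 - 60 * s ^ 2 + 20 * s)
        + a * (40 * s ^ 3 - 120 * s ^ 2 + 80 * s)
        + a * k * (120 * s ^ 2 - 120 * s) + 120 * a ^ 2 * s := by
  induction s generalizing a k with
  | zero => simp [quadSeq]
  | succ s ih =>
    have := ih (a + k) (k + 1)
    simp only [quadSeq, map_cons, sum_cons] at this ⊢
    push_cast at this ⊢
    linear_combination this

theorem quadSeq_inj {a k b l s : ℕ} (hsum : (quadSeq a k s).sum = (quadSeq b l s).sum)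
    (hsq : ((quadSeq a k s).map (· ^ 2)).sum = ((quadSeq b l s).map (· ^ 2)).sum) :
    quadSeq a k s = quadSeq b l s := by
  obtain _ | _ | s := s
  · rfl
  · simpa [quadSeq] using hsum
  have e1 := sum_quadSeq a k (s + 2)
  have e2 := sum_quadSeq b l (s + 2)
  have e3 := sum_sq_quadSeq a k (s + 2)
  have e4 := sum_sq_quadSeq b l (s + 2)
  rw [hsum] at e1
  rw [hsq] at e3
  set S : ℤ := ((s + 2 : ℕ) : ℤ)
  have hS : 2 ≤ S := by simp [S]
  have hab : 2 * ((a : ℤ) - b) = (S - 1) * ((l : ℤ) - k) := by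
    have : 3 * S * (2 * ((a : ℤ) - b) - (S - 1) * ((l : ℤ) - k)) = 0 := by
      linear_combination e2 - e1
    linear_combination (mul_eq_zero.1 this).resolve_left (by omega)
  have hkl : 10 * S * (S ^ 2 - 1) * (((l : ℤ) - k) * (k + l + S - 2)) = 0 := by
    linear_combination (20 * S * (S - 1) * (S - 2) + 30 * S * (S - 1) * ((k : ℤ) + l)
      + 60 * S * ((a : ℤ) + b)) * hab - e4 + e3
  have hlk : (l : ℤ) = k := by
    have hpos : 10 * S * (S ^ 2 - 1) ≠ 0 := (mul_pos (by omega) (by nlinarith)).ne'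
    rcases mul_eq_zero.1 ((mul_eq_zero.1 hkl).resolve_left hpos) with h | h <;> omega
  have hba : (a : ℤ) = b := by rw [hlk] at hab; linarith
  rw [show a = b by omega, show l = k by omega]

theorem mAp_cons {A B : Type*} (f : A → List B) (a : A) (u : List A) :
    mAp f (a :: u) = f a ++ mAp f u := rfl

theorem mAp_append {A B : Type*} (f : A → List B) (u v : List A) :
    mAp f (u ++ v) = mAp f u ++ mAp f v := by
  simp [mAp]

def blocks : ℕ → ℕ → List (Fin 3)
  | _, 0 => []
  | k, s + 1 => 1 :: replicate k 2 ++ blocks (k + 1) s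

theorem le_length_blocks (k s : ℕ) : s ≤ (blocks k s).length := by
  induction s generalizing k with
  | zero => exact le_rfl
  | succ s ih => simpa [blocks] using (ih (k + 1)).trans (Nat.le_add_left _ k)

theorem zero_notMem_blocks (k s : ℕ) : (0 : Fin 3) ∉ blocks k s := by
  induction s generalizing k with
  | zero => simp [blocks]
  | succ s ih => simp [blocks, ih, mem_replicate]

theorem mem_blocks {c : Fin 3} {k s : ℕ} (hc : c ∈ blocks k s) : c = 2 ∨ c = 1 := by
  have := zero_notMem_blocks k s
  fin_cases c <;> simp_all

theorem mAp_mu_replicate_two (k : ℕ) : mAp mu (replicate k 2) = replicate k 2 := by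
  induction k with
  | zero => rfl
  | succ k ih => rw [replicate_succ, mAp_cons, ih]; rfl

theorem mAp_mu_blocks (k s : ℕ) : mAp mu (blocks k s) = blocks (k + 1) s := by
  induction s generalizing k with
  | zero => rfl
  | succ s ih =>
    rw [blocks, blocks, mAp_append, mAp_cons, mAp_mu_replicate_two, ih]
    simp [mu, replicate_succ]

theorem mAp_mu_zero_cons_blocks (s : ℕ) : mAp mu (0 :: blocks 0 s) = 0 :: blocks 0 (s + 1) := by
  rw [mAp_cons, mAp_mu_blocks]
  rfl

theorem countsBefore_blocks (k s : ℕ) : countsBefore 2 1 (blocks k s) = quadSeq 0 k s := by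
  induction s generalizing k with
  | zero => rfl
  | succ s ih =>
    rw [blocks, cons_append, countsBefore_cons, countsBefore_append, ih, map_add_quadSeq]
    simp [quadSeq, countsBefore_eq_nil, mem_replicate]

theorem isQuadSeq_countsBefore_of_infix_blocks {u : List (Fin 3)} {k s : ℕ}
    (hu : u <:+: blocks k s) : IsQuadSeq (countsBefore 2 1 u) := by
  obtain ⟨d, hd⟩ := exists_map_add_infix_countsBefore (x := (2 : Fin 3)) (y := 1) hu
  rw [countsBefore_blocks] at hd
  exact (IsQuadSeq.of_infix hd ⟨0, k, s, rfl⟩).of_map_add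

theorem eq_of_binEquiv_of_infix_blocks {u v : List (Fin 3)} {k s k' s' : ℕ}
    (hu : u <:+: blocks k s) (hv : v <:+: blocks k' s') (hlen : u.length = v.length)
    (h : BinEquiv 3 u v) : u = v := by
  obtain ⟨a, l, m, hau⟩ := isQuadSeq_countsBefore_of_infix_blocks hu
  obtain ⟨b, l', m', hbv⟩ := isQuadSeq_countsBefore_of_infix_blocks hv
  obtain rfl : m = m' := by
    rw [← length_quadSeq a l m, ← hau, ← length_quadSeq b l' m', ← hbv, length_countsBefore,
      length_countsBefore, h.count_eq (by norm_num)]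
  refine countsBefore_injective (by decide) (fun c hc => mem_blocks (hu.subset hc))
    (fun c hc => mem_blocks (hv.subset hc)) hlen ?_
  rw [hau, hbv]
  apply quadSeq_inj
  · rw [← hau, ← hbv, ← wordBinom_pair, ← wordBinom_pair, h _ (by simp)]
  · rw [← hau, ← hbv, ← wordBinom_triple, ← wordBinom_triple, h _ (by simp), h _ (by simp)]

theorem OccursAt.eq_take_drop_pre {A : Type*} {u : List A} {x : ℕ → A} {i L : ℕ}
    (h : OccursAt u x i) (hL : i + u.length ≤ L) : u = ((pre x L).drop i).take u.length := by
  rw [OccursAt] at h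
  rw [h, length_map, length_range]
  exact ext_getElem (by simp [pre]; omega) fun j _ _ => by simp [pre]

theorem pre_eq_zero_cons_blocks {x : ℕ → Fin 3} (h0 : x 0 = 0) (hfix : InfMapsTo mu x x)
    (s : ℕ) : pre x (0 :: blocks 0 s).length = 0 :: blocks 0 s := by
  induction s with
  | zero => simp [pre, blocks, h0]
  | succ s ih =>
    have := hfix.1 (0 :: blocks 0 s).length
    rwa [ih, mAp_mu_zero_cons_blocks, eq_comm] at this

theorem eq_pre_or_infix_blocks {x : ℕ → Fin 3} (h0 : x 0 = 0) (hfix : InfMapsTo mu x x)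
    {u : List (Fin 3)} {n : ℕ} (hu : u ∈ Fac x n) :
    u = pre x n ∨ ∃ s, u <:+: blocks 0 s := by
  obtain ⟨rfl, i, hi⟩ := hu
  cases i with
  | zero => exact Or.inl (by simpa [OccursAt, pre] using hi)
  | succ i =>
    set s := i + 1 + u.length
    have hL : i + 1 + u.length ≤ (0 :: blocks 0 s).length :=
      (le_length_blocks 0 s).trans (Nat.le_succ _)
    have hu := hi.eq_take_drop_pre hL
    rw [pre_eq_zero_cons_blocks h0 hfix, drop_succ_cons] at hu
    exact Or.inr ⟨s, hu ▸ (take_prefix _ _).isInfix.trans (drop_suffix _ _).isInfix⟩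

theorem eq_zero_of_count_pre_eq_of_infix_blocks {x : ℕ → Fin 3} {v : List (Fin 3)} {n k s : ℕ}
    (h0 : x 0 = 0) (hv : v <:+: blocks k s) (h : (pre x n).count 0 = v.count 0) : n = 0 := by
  rw [count_eq_zero.2 fun h' => zero_notMem_blocks k s (hv.subset h')] at h
  by_contra hn
  exact count_eq_zero.1 h (mem_map.2 ⟨0, mem_range.2 (Nat.pos_of_ne_zero hn), h0⟩)

theorem mu_fixed_point_3binomial_eq_factor_complexity (h : ℕ → Fin 3) (h0 : h 0 = 0)
    (hfix : InfMapsTo mu h h) :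
    ∀ n : ℕ, bc h 3 n = fc h n := by
  intro n
  refine Set.InjOn.ncard_image fun u hu v hv huv => ?_
  have hbin : BinEquiv 3 u v := Quotient.exact huv
  have hcount := hbin.count_eq (by norm_num) 0
  rcases eq_pre_or_infix_blocks h0 hfix hu with rfl | ⟨s, hus⟩ <;>
    rcases eq_pre_or_infix_blocks h0 hfix hv with rfl | ⟨t, hvt⟩
  · rfl
  · obtain rfl := eq_zero_of_count_pre_eq_of_infix_blocks h0 hvt hcount
    exact (eq_nil_of_length_eq_zero hv.1).symm
  · obtain rfl := eq_zero_of_count_pre_eq_of_infix_blocks h0 hus hcount.symm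
    exact eq_nil_of_length_eq_zero hu.1
  · exact eq_of_binEquiv_of_infix_blocks hus hvt (hu.1.trans hv.1.symm) hbin
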